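/- Let T be a finite connected multigraph with edges labeled positive or negative. If e is a negative edge lying in no cycle consisting entirely of negative edges, then every spanning tree minimizing η contains e, where η(t) is the number of positive minus negative edges of t. -/

import Mathlib

/-- A finite multigraph: vertex type `V`, edge type `E`, each edge has an
unordered pair of endpoints (loops and parallel edges are allowed). -/
structure Multigraph where
  V : Type
  E : Type
  fV : Fintype V
  fE : Fintype E
  dV : DecidableEq V
  dE : DecidableEq E
  ends : E → Sym2 V

attribute [instance] Multigraph.fV Multigraph.fE Multigraph.dV Multigraph.dE

namespace Multigraph

variable (G : Multigraph)

/-- `u` and `v` are joined by an edge of the edge set `S`. -/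
def adjOn (S : Finset G.E) (u v : G.V) : Prop :=
  ∃ e ∈ S, G.ends e = s(u, v)

/-- `u` and `v` are joined by a walk using only edges of `S`. -/
def reach (S : Finset G.E) (u v : G.V) : Prop :=
  Relation.ReflTransGen (G.adjOn S) u v

/-- The spanning subgraph with edge set `S` is connected. -/
def connectedOn (S : Finset G.E) : Prop := ∀ u v : G.V, G.reach S u v

/-- The multigraph is connected. -/
def Connected : Prop := Nonempty G.V ∧ G.connectedOn Finset.univ

/-- The subgraph with edge set `S` contains no cycle: no edge of `S` has its
endpoints joined within `S` minus that edge. -/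
def acyclicOn (S : Finset G.E) : Prop :=
  ∀ e ∈ S, ∀ u v : G.V, G.ends e = s(u, v) → ¬ G.reach (S.erase e) u v

/-- `S` is the edge set of a spanning tree: connected and acyclic spanning
subgraph. -/
def IsSpanningTree (S : Finset G.E) : Prop :=
  G.connectedOn S ∧ G.acyclicOn S

/-- the edge `e` lies in a cycle all of whose edges belong to `S`. -/
def InCycleOn (S : Finset G.E) (e : G.E) : Prop :=
  e ∈ S ∧ ∃ u v : G.V, G.ends e = s(u, v) ∧ G.reach (S.erase e) u v

/-- the positive edges, for a sign labelling (`true` = positive). -/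
def posEdges (sign : G.E → Bool) : Finset G.E :=
  Finset.univ.filter fun e => sign e = true

/-- the negative edges. -/
def negEdges (sign : G.E → Bool) : Finset G.E :=
  Finset.univ.filter fun e => sign e = false

/-- `e` lies in a cycle consisting entirely of positive edges. -/
def InPositiveCycle (sign : G.E → Bool) (e : G.E) : Prop :=
  G.InCycleOn (G.posEdges sign) e

/-- `e` lies in a cycle consisting entirely of negative edges. -/
def InNegativeCycle (sign : G.E → Bool) (e : G.E) : Prop :=
  G.InCycleOn (G.negEdges sign) e

/-- `η(t)` = (# positive edges of `t`) − (# negative edges of `t`). -/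
def eta (sign : G.E → Bool) (t : Finset G.E) : ℤ :=
  ((t.filter fun e => sign e = true).card : ℤ) -
    (t.filter fun e => sign e = false).card

/-- `S` contains a cycle. -/
def Dependent (S : Finset G.E) : Prop := ¬ G.acyclicOn S

/-- `C` is (the edge set of) a cycle: a minimal dependent set. -/
def IsCircuit (C : Finset G.E) : Prop :=
  G.Dependent C ∧ ∀ C' ⊂ C, G.acyclicOn C'

/-- the set of values of `η` on spanning trees. -/
def etaSet (sign : G.E → Bool) : Set ℤ :=
  {x | ∃ t : Finset G.E, G.IsSpanningTree t ∧ G.eta sign t = x}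

end Multigraph


/-!
Exchange argument. Suppose the negative edge `e = uv` is missing from an `η`-minimal spanning
tree `t`. A minimal set of edges of `t` joining `u` to `v` cannot consist of negative edges only,
since together with `e` it would give an all-negative cycle through `e`; so it contains a positive
edge `f` whose removal separates `u` from `v` in `t`. Then `t - f + e` is again a spanning tree,
and `η(t - f + e) = η(t) - 2`, contradicting minimality.
-/

namespace Multigraph

variable {G : Multigraph} {S T : Finset G.E} {e f : G.E} {a b u v x y : G.V}

lemma adjOn_symm (h : G.adjOn S a b) : G.adjOn S b a := by
  obtain ⟨g, hg, hends⟩ := h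
  exact ⟨g, hg, hends.trans Sym2.eq_swap⟩

lemma reach_symm (h : G.reach S a b) : G.reach S b a := by
  induction h with
  | refl => exact .refl
  | tail _ hcb ih => exact .head (adjOn_symm hcb) ih

lemma reach_mono (hST : S ⊆ T) (h : G.reach S a b) : G.reach T a b :=
  Relation.ReflTransGen.mono (fun _ _ ⟨g, hg, hends⟩ => ⟨g, hST hg, hends⟩) _ _ h

lemma reach_of_mem (hf : f ∈ S) (hends : G.ends f = s(a, b)) : G.reach S a b :=
  .single ⟨f, hf, hends⟩

lemma reach_of_sym2_eq (hab : s(a, b) = s(x, y)) (h : G.reach S x y) : G.reach S a b := by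
  rcases Sym2.eq_iff.1 hab with ⟨rfl, rfl⟩ | ⟨rfl, rfl⟩
  · exact h
  · exact reach_symm h

lemma reach_erase_or_exists (f : G.E) (h : G.reach S a b) :
    G.reach (S.erase f) a b ∨
      ∃ x y, G.ends f = s(x, y) ∧ G.reach (S.erase f) a x ∧ G.reach (S.erase f) y b := by
  induction h using Relation.ReflTransGen.head_induction_on with
  | refl => exact .inl .refl
  | @head a c hac _ ih =>
    obtain ⟨g, hgS, hg⟩ := hac
    rcases eq_or_ne g f with rfl | hgf
    · rcases ih with ih | ⟨x, y, hxy, -, hyb⟩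
      · exact .inr ⟨a, c, hg, .refl, ih⟩
      · rcases Sym2.eq_iff.1 (hg.symm.trans hxy) with ⟨rfl, rfl⟩ | ⟨rfl, rfl⟩
        · exact .inr ⟨a, c, hg, .refl, hyb⟩
        · exact .inl hyb
    · have hadj : G.adjOn (S.erase f) a c := ⟨g, Finset.mem_erase.2 ⟨hgf, hgS⟩, hg⟩
      rcases ih with ih | ⟨x, y, hxy, hcx, hyb⟩
      · exact .inl (.head hadj ih)
      · exact .inr ⟨x, y, hxy, .head hadj hcx, hyb⟩

lemma reach_mono_of_reach_ends (hf : G.ends f = s(x, y)) (hST : S.erase f ⊆ T)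
    (hxy : G.reach T x y) (h : G.reach S a b) : G.reach T a b := by
  induction h with
  | refl => exact .refl
  | tail _ hcd ih =>
    obtain ⟨g, hgS, hg⟩ := hcd
    refine ih.trans ?_
    rcases eq_or_ne g f with rfl | hgf
    · exact reach_of_sym2_eq (hg.symm.trans hf) hxy
    · exact reach_of_mem (hST (Finset.mem_erase.2 ⟨hgf, hgS⟩)) hg

lemma acyclicOn.subset (hT : G.acyclicOn T) (hST : S ⊆ T) : G.acyclicOn S :=
  fun g hg _ _ hends hr => hT g (hST hg) _ _ hends (reach_mono (Finset.erase_subset_erase g hST) hr)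

lemma acyclicOn_insert (hT : G.acyclicOn T) (he : G.ends e = s(u, v))
    (huv : ¬ G.reach T u v) : G.acyclicOn (insert e T) := by
  have heT : e ∉ T := fun h => huv (reach_of_mem h he)
  intro g hg p q hpq hr
  rcases eq_or_ne g e with rfl | hge
  · rw [Finset.erase_insert heT] at hr
    exact huv (reach_of_sym2_eq (he.symm.trans hpq) hr)
  have hgT : g ∈ T := (Finset.mem_insert.1 hg).resolve_left hge
  rw [Finset.erase_insert_of_ne hge.symm] at hr
  have hsub : (insert e (T.erase g)).erase e ⊆ T.erase g := Finset.erase_insert_subset e _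
  rcases reach_erase_or_exists e hr with h | ⟨x, y, hxy, hpx, hyq⟩
  · exact hT g hgT p q hpq (reach_mono hsub h)
  · have hsub' := hsub.trans (Finset.erase_subset g T)
    have hpx' := reach_mono hsub' hpx
    have hyq' := reach_mono hsub' hyq
    exact huv (reach_of_sym2_eq (he.symm.trans hxy)
      ((reach_symm hpx').trans ((reach_of_mem hgT hpq).trans (reach_symm hyq'))))

/-- Basis exchange; the hypotheses say that `f = xy` lies on the path of `t` from `u` to `v`. -/
lemma IsSpanningTree.insert_erase {t : Finset G.E} (ht : G.IsSpanningTree t)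
    (he : G.ends e = s(u, v)) (hft : f ∈ t) (hf : G.ends f = s(x, y))
    (hux : G.reach (t.erase f) u x) (hyv : G.reach (t.erase f) y v) :
    G.IsSpanningTree (insert e (t.erase f)) := by
  have hsub : t.erase f ⊆ insert e (t.erase f) := Finset.subset_insert e _
  have hxy : G.reach (insert e (t.erase f)) x y :=
    (reach_symm (reach_mono hsub hux)).trans
      ((reach_of_mem (Finset.mem_insert_self e _) he).trans (reach_symm (reach_mono hsub hyv)))
  have hsep : ¬ G.reach (t.erase f) u v := fun huv =>
    ht.2 f hft x y hf ((reach_symm hux).trans (huv.trans (reach_symm hyv)))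
  exact ⟨fun a b => reach_mono_of_reach_ends hf hsub hxy (ht.1 a b),
    acyclicOn_insert (ht.2.subset (Finset.erase_subset f t)) he hsep⟩

lemma exists_split_edge_of_not_reach_filter (P : G.E → Prop) [DecidablePred P]
    (h : G.reach T u v) (hP : ¬ G.reach (T.filter P) u v) :
    ∃ f ∈ T, ¬ P f ∧ ∃ x y, G.ends f = s(x, y) ∧
      G.reach (T.erase f) u x ∧ G.reach (T.erase f) y v := by
  obtain ⟨S, hST, hmin⟩ := exists_minimal_le_of_wellFoundedLT (G.reach · u v) T h
  have hS : G.reach S u v := hmin.prop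
  obtain ⟨f, hfS, hPf⟩ : ∃ f ∈ S, ¬ P f := by
    by_contra! hall
    exact hP (reach_mono (fun g hg => Finset.mem_filter.2 ⟨hST hg, hall g hg⟩) hS)
  have hST' : S.erase f ⊆ T.erase f := Finset.erase_subset_erase f hST
  rcases reach_erase_or_exists f hS with h | ⟨x, y, hxy, hux, hyv⟩
  · exact absurd h (hmin.not_prop_of_lt (Finset.erase_ssubset hfS))
  · exact ⟨f, hST hfS, hPf, x, y, hxy, reach_mono hST' hux, reach_mono hST' hyv⟩

lemma eta_insert {sign : G.E → Bool} {t : Finset G.E} (he : e ∉ t) :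
    G.eta sign (insert e t) = G.eta sign t + bif sign e then 1 else -1 := by
  unfold eta
  rw [Finset.filter_insert, Finset.filter_insert]
  cases h : sign e <;> simp [Finset.card_insert_of_notMem, he] <;> ring

lemma eta_erase {sign : G.E → Bool} {t : Finset G.E} (hf : f ∈ t) :
    G.eta sign (t.erase f) = G.eta sign t - bif sign f then 1 else -1 := by
  conv_rhs => rw [← Finset.insert_erase hf, eta_insert (Finset.notMem_erase f t)]
  ring

lemma not_reach_filter_neg {sign : G.E → Bool} {t : Finset G.E} (he : sign e = false)
    (hnc : ¬ G.InNegativeCycle sign e) (het : e ∉ t) (huv : G.ends e = s(u, v)) :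
    ¬ G.reach (t.filter (sign · = false)) u v := fun h =>
  hnc ⟨by simp [negEdges, he], u, v, huv, reach_mono (fun g hg => by
    simp only [Finset.mem_filter] at hg
    simp [negEdges, hg.2, ne_of_mem_of_not_mem hg.1 het]) h⟩

end Multigraph

theorem stmt3_general (G : Multigraph) (sign : G.E → Bool)
    (e : G.E) (he : sign e = false) (hnc : ¬ G.InNegativeCycle sign e)
    (t : Finset G.E) (ht : G.IsSpanningTree t)
    (hmin : ∀ t' : Finset G.E, G.IsSpanningTree t' →
      G.eta sign t ≤ G.eta sign t') :
    e ∈ t := by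
  by_contra het
  obtain ⟨u, v, huv⟩ : ∃ u v, G.ends e = s(u, v) := Sym2.exists.1 ⟨_, rfl⟩
  obtain ⟨f, hft, hf, x, y, hxy, hux, hyv⟩ := Multigraph.exists_split_edge_of_not_reach_filter _
    (ht.1 u v) (Multigraph.not_reach_filter_neg he hnc het huv)
  have hfpos : sign f = true := by simpa using hf
  have hexch := hmin _ (ht.insert_erase huv hft hxy hux hyv)
  rw [Multigraph.eta_insert fun h => het (Finset.mem_of_mem_erase h),
    Multigraph.eta_erase hft] at hexch
  simp [he, hfpos] at hexch

/-- A negative edge lying in no all-negative cycle belongs to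
every `η`-minimizing spanning tree. -/
theorem stmt3 (G : Multigraph) (hconn : G.Connected) (sign : G.E → Bool)
    (e : G.E) (he : sign e = false) (hnc : ¬ G.InNegativeCycle sign e)
    (t : Finset G.E) (ht : G.IsSpanningTree t)
    (hmin : ∀ t' : Finset G.E, G.IsSpanningTree t' →
      G.eta sign t ≤ G.eta sign t') :
    e ∈ t :=
  stmt3_general G sign e he hnc t ht hmin
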